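/- arXiv:2509.19253 — 2 statements merged into one kernel-verified Lean document; each statement's English description precedes it below -/
import Mathlib

section
/- With the setup of the two-coordinate sampling function: fix n, d ≥ 1 and a probability vector b on [n] with b_k > 0 for all k. Define the rounded-down function v̲(u,b,d) = k (k ≤ n-1) if u^{(2)} ≤ (⌊b_k 2^d⌋ b([n-1]))/(2^d b_k) and u^{(1)} ∈ [b([k-1])/b([n-1]), b([k])/b([n-1])), and v̲ = n otherwise. If U is uniform on [0,1]², then P(v̲(U,b,d) = k) = ⌊b_k 2^d⌋/2^d for each k ∈ [n-1]. -/
open MeasureTheory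
open scoped Classical

/-- The rounded-down two-coordinate sampling function `v̲` (colors 0-based, so the `n`-th
color of the paper is `n-1` here): with `S = b([n-1]) = b_0 + ⋯ + b_{n-2}`,
`v̲(u,b,d) = k` for `k < n-1` if `u₂ ≤ ⌊b_k 2^d⌋·S/(2^d·b_k)` and
`u₁ ∈ [b([k])/S, b([k+1])/S)`, and `v̲(u,b,d) = n-1` otherwise. -/
noncomputable def sampleColorDown (n d : ℕ) (b : ℕ → ℝ) (u : ℝ × ℝ) : ℕ :=
  if h : ∃ k, k < n - 1 ∧
      u.2 ≤ (⌊b k * 2 ^ d⌋ : ℝ) * (∑ i ∈ Finset.range (n - 1), b i) / (2 ^ d * b k) ∧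
      (∑ i ∈ Finset.range k, b i) / (∑ i ∈ Finset.range (n - 1), b i) ≤ u.1 ∧
      u.1 < (∑ i ∈ Finset.range (k + 1), b i) / (∑ i ∈ Finset.range (n - 1), b i)
  then Nat.find h
  else n - 1

/-- If `b` is a probability vector on `{0, …, n-1}` with all entries positive and `U` is
uniform on `[0,1]²`, then `P(v̲(U,b,d) = k) = ⌊b_k 2^d⌋/2^d` for each `k < n-1`. -/
theorem sampleColorDown_dist (n d : ℕ) (hn : 1 ≤ n) (hd : 1 ≤ d) (b : ℕ → ℝ)
    (hb : ∀ i < n, 0 < b i) (hsum : ∑ i ∈ Finset.range n, b i = 1) :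
    ∀ k < n - 1,
      (volume.restrict (Set.Icc (0 : ℝ) 1 ×ˢ Set.Icc (0 : ℝ) 1))
          {u : ℝ × ℝ | sampleColorDown n d b u = k}
        = ENNReal.ofReal ((⌊b k * 2 ^ d⌋ : ℝ) / 2 ^ d) := by
  intro k hk
  set S := ∑ i ∈ Finset.range (n - 1), b i with hSdef
  have hn2 : 2 ≤ n := by omega
  have hbk : 0 < b k := hb k (by omega)
  have hSpos : 0 < S := Finset.sum_pos
    (fun i hi => hb i (by have := Finset.mem_range.mp hi; omega))
    ⟨0, Finset.mem_range.mpr (by omega)⟩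
  have hS1 : S ≤ 1 := by
    rw [← hsum]
    exact Finset.sum_le_sum_of_subset_of_nonneg
      (Finset.range_subset_range.2 (by omega))
      (fun i hi _ => (hb i (Finset.mem_range.mp hi)).le)
  have hpartial : ∀ j, j ≤ n - 1 → ∑ i ∈ Finset.range j, b i ≤ S := by
    intro j hj
    exact Finset.sum_le_sum_of_subset_of_nonneg (Finset.range_subset_range.2 hj)
      (fun i hi _ => (hb i (by have := Finset.mem_range.mp hi; omega)).le)
  have hmono : ∀ j j' : ℕ, j ≤ j' → j' ≤ n - 1 →
      (∑ i ∈ Finset.range j, b i) / S ≤ (∑ i ∈ Finset.range j', b i) / S := by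
    intro j j' hjj hj'
    have hsum' : ∑ i ∈ Finset.range j, b i ≤ ∑ i ∈ Finset.range j', b i :=
      Finset.sum_le_sum_of_subset_of_nonneg (Finset.range_subset_range.2 hjj)
        (fun i hi _ => (hb i (by have := Finset.mem_range.mp hi; omega)).le)
    gcongr
  set c : ℝ := (⌊b k * 2 ^ d⌋ : ℝ) * S / (2 ^ d * b k) with hcdef
  set a : ℝ := (∑ i ∈ Finset.range k, b i) / S with hadef
  set a' : ℝ := (∑ i ∈ Finset.range (k + 1), b i) / S with ha'def
  have h2d : (0:ℝ) < 2 ^ d := by positivity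
  have hfloor0 : (0:ℝ) ≤ (⌊b k * 2 ^ d⌋ : ℝ) := by
    have : (0:ℤ) ≤ ⌊b k * 2 ^ d⌋ := Int.floor_nonneg.mpr (by positivity)
    exact_mod_cast this
  have hc0 : 0 ≤ c := by positivity
  have hc1 : c ≤ 1 := by
    have hle : (⌊b k * 2 ^ d⌋ : ℝ) ≤ b k * 2 ^ d := Int.floor_le _
    rw [hcdef, div_le_one (by positivity)]
    calc (⌊b k * 2 ^ d⌋ : ℝ) * S ≤ (b k * 2 ^ d) * S := by
          apply mul_le_mul_of_nonneg_right hle hSpos.le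
      _ ≤ (b k * 2 ^ d) * 1 := by
          apply mul_le_mul_of_nonneg_left hS1 (by positivity)
      _ = 2 ^ d * b k * 1 := by ring
      _ = 2 ^ d * b k := by ring
  have ha0 : 0 ≤ a := by
    apply div_nonneg _ hSpos.le
    exact Finset.sum_nonneg (fun i hi => (hb i (by have := Finset.mem_range.mp hi; omega)).le)
  have ha'1 : a' ≤ 1 := by
    rw [ha'def, div_le_one hSpos]
    exact hpartial (k + 1) (by omega)
  -- set equality
  have hset : {u : ℝ × ℝ | sampleColorDown n d b u = k} = Set.Ico a a' ×ˢ Set.Iic c := by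
    ext u
    simp only [Set.mem_setOf_eq, Set.mem_prod, Set.mem_Ico, Set.mem_Iic]
    constructor
    · intro hu
      unfold sampleColorDown at hu
      split at hu
      · next h =>
          have hs := Nat.find_spec h
          rw [hu] at hs
          exact ⟨⟨hs.2.2.1, hs.2.2.2⟩, hs.2.1⟩
      · omega
    · rintro ⟨⟨h1, h2⟩, h3⟩
      have hex : ∃ k', k' < n - 1 ∧
          u.2 ≤ (⌊b k' * 2 ^ d⌋ : ℝ) * S / (2 ^ d * b k') ∧
          (∑ i ∈ Finset.range k', b i) / S ≤ u.1 ∧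
          u.1 < (∑ i ∈ Finset.range (k' + 1), b i) / S := ⟨k, hk, h3, h1, h2⟩
      unfold sampleColorDown
      rw [dif_pos hex]
      have hle : Nat.find hex ≤ k := Nat.find_le ⟨hk, h3, h1, h2⟩
      rcases lt_or_eq_of_le hle with hlt | heq
      · exfalso
        have hs := Nat.find_spec hex
        have h4 : u.1 < (∑ i ∈ Finset.range (Nat.find hex + 1), b i) / S := hs.2.2.2
        have h5 : (∑ i ∈ Finset.range (Nat.find hex + 1), b i) / S ≤ a :=
          hmono _ _ (by omega) (by omega)
        linarith
      · exact heq
  rw [hset, Measure.restrict_apply (measurableSet_Ico.prod measurableSet_Iic),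
    Set.prod_inter_prod, Measure.volume_eq_prod, Measure.prod_prod]
  have h1 : Set.Ico a a' ∩ Set.Icc (0:ℝ) 1 = Set.Ico a a' := by
    apply Set.inter_eq_left.2
    intro x hx
    exact ⟨le_trans ha0 hx.1, le_of_lt (lt_of_lt_of_le hx.2 ha'1)⟩
  have h2 : Set.Iic c ∩ Set.Icc (0:ℝ) 1 = Set.Icc 0 c := by
    ext x
    simp only [Set.mem_inter_iff, Set.mem_Iic, Set.mem_Icc]
    constructor
    · rintro ⟨hxc, hx0, hx1⟩; exact ⟨hx0, hxc⟩
    · rintro ⟨hx0, hxc⟩; exact ⟨hxc, hx0, le_trans hxc hc1⟩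
  rw [h1, h2, Real.volume_Ico, Real.volume_Icc]
  have haa : a' - a = b k / S := by
    rw [ha'def, hadef, div_sub_div_same, Finset.sum_range_succ]
    ring_nf
  rw [haa, sub_zero, ← ENNReal.ofReal_mul (by positivity)]
  congr 1
  rw [hcdef]
  field_simp
end

section
/- Let (X_N) be real random variables and let W_N = (1/ξ_N) Σ_{i=1}^{ξ_N} 1_{U_i ≤ X_N}, where the U_i are i.i.d. uniform on [0,1] independent of X_N and ξ_N → ∞ in probability. If the limits F̄(a) = limsup_N P(X_N ≤ a) and F̲(a) = liminf_N P(X_N ≤ a) satisfy appropriate continuity, and lim_N P(W_N ≤ a) exists at all continuity points a, then lim_N P(X_N ≤ a) = lim_N P(W_N ≤ a) at all points a of continuity of the latter. In particular, X_N converges in distribution if and only if W_N does, and then to the same limit. -/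
open MeasureTheory ProbabilityTheory Filter Set Topology

/-! Given `(X_N, ξ_N) = (x, n)`, the frequency `W_N` is the average of `n` independent
Bernoulli(`x`) variables, so Chebyshev's inequality bounds `P(ε ≤ |W_N - X_N|, C ≤ ξ_N)` by
`1 / (4 C ε²)` uniformly in `N`. Since `ξ_N → ∞` in probability, `W_N - X_N → 0` in probability.
For `b < a < b'` the sandwich
`P(W_N ≤ b) - P(a - b ≤ |W_N - X_N|) ≤ P(X_N ≤ a) ≤ P(W_N ≤ b') + P(b' - a ≤ |W_N - X_N|)`,
with `b, b'` continuity points of `G` (dense, as `G` is monotone) close to `a`, then transfers the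
limit `G a` from `W_N` to `X_N`. -/

section Chebyshev

variable {Ω : Type*} {mΩ : MeasurableSpace Ω} {μ : Measure Ω}

theorem measure_abs_average_sub_ge_le [IsFiniteMeasure μ] {B : ℕ → Ω → ℝ}
    (hB : ∀ i, MemLp (B i) 2 μ) (hind : Pairwise fun i j => B i ⟂ᵢ[μ] B j) {m v : ℝ}
    (hm : ∀ i, μ[B i] = m) (hv : ∀ i, Var[B i; μ] ≤ v) {n : ℕ} (hn : 0 < n) {ε : ℝ}
    (hε : 0 < ε) :
    μ {ω | ε ≤ |(n : ℝ)⁻¹ * ∑ i ∈ Finset.range n, B i ω - m|} ≤ ENNReal.ofReal (v / n / ε ^ 2) := by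
  set S : Ω → ℝ := (n : ℝ)⁻¹ • ∑ i ∈ Finset.range n, B i with hS
  have hSB : ∀ ω, S ω = (n : ℝ)⁻¹ * ∑ i ∈ Finset.range n, B i ω := by simp [hS, Finset.sum_apply]
  have hmean : μ[S] = m := by
    simp_rw [hSB]
    rw [integral_const_mul, integral_finsetSum _ fun i _ => (hB i).integrable one_le_two]
    simp only [hm, Finset.sum_const, Finset.card_range, nsmul_eq_mul]
    field_simp
  have hvar : Var[S; μ] ≤ v / n := by
    rw [hS, variance_smul, IndepFun.variance_sum (fun i _ => hB i) fun i _ j _ hij => hind hij]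
    calc ((n : ℝ)⁻¹) ^ 2 * ∑ i ∈ Finset.range n, Var[B i; μ] ≤ ((n : ℝ)⁻¹) ^ 2 * (n * v) := by
          gcongr
          exact (Finset.sum_le_sum fun i _ => hv i).trans_eq
            (by rw [Finset.sum_const, Finset.card_range, nsmul_eq_mul])
      _ = v / n := by field_simp
  have hSmem : MemLp S 2 μ := (memLp_finsetSum' _ fun i _ => hB i).const_smul _
  calc μ {ω | ε ≤ |(n : ℝ)⁻¹ * ∑ i ∈ Finset.range n, B i ω - m|}
        = μ {ω | ε ≤ |S ω - μ[S]|} := by rw [hmean]; simp only [hSB]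
    _ ≤ ENNReal.ofReal (Var[S; μ] / ε ^ 2) := meas_ge_le_variance_div_sq hSmem hε
    _ ≤ ENNReal.ofReal (v / n / ε ^ 2) := by gcongr

theorem variance_indicator_one [IsProbabilityMeasure μ] {A : Set Ω} (hA : MeasurableSet A) :
    Var[A.indicator 1; μ] = μ.real A * (1 - μ.real A) := by
  have hmem : MemLp (A.indicator (1 : Ω → ℝ)) 2 μ :=
    (memLp_const 1).indicator hA
  have hsq : A.indicator (1 : Ω → ℝ) ^ 2 = A.indicator 1 := by
    ext ω; by_cases h : ω ∈ A <;> simp [h]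
  rw [variance_eq_sub hmem, hsq, integral_indicator_one hA]
  ring

end Chebyshev

section Uniform

variable {Ω : Type*} {mΩ : MeasurableSpace Ω} {μ : Measure Ω}

theorem measureReal_preimage_Iic_of_map_eq {U : Ω → ℝ} (hU : Measurable U)
    (hUdist : μ.map U = volume.restrict (Icc 0 1)) {x : ℝ} (hx : x ∈ Icc (0 : ℝ) 1) :
    μ.real (U ⁻¹' Iic x) = x := by
  rw [measureReal_def, ← Measure.map_apply hU measurableSet_Iic, hUdist,
    Measure.restrict_apply measurableSet_Iic]
  have hIcc : Iic x ∩ Icc 0 1 = Icc 0 x := by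
    ext y; simp only [mem_inter_iff, mem_Iic, mem_Icc]; grind
  simp [hIcc, hx.1]

noncomputable def empiricalFreq (x : ℝ) (n : ℕ) (u : ℕ → ℝ) : ℝ :=
  (n : ℝ)⁻¹ * ∑ i ∈ Finset.range n, if u i ≤ x then 1 else 0

theorem measurable_empiricalFreq :
    Measurable fun p : (ℝ × ℕ) × (ℕ → ℝ) => empiricalFreq p.1.1 p.1.2 p.2 := by
  have h : Measurable fun q : (ℝ × (ℕ → ℝ)) × ℕ => empiricalFreq q.1.1 q.2 q.1.2 := by
    refine measurable_from_prod_countable_left fun n => ?_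
    dsimp only [empiricalFreq]
    refine measurable_const.mul (Finset.measurable_fun_sum _ fun i _ => ?_)
    exact Measurable.ite (measurableSet_le (by fun_prop) (by fun_prop))
      measurable_const measurable_const
  exact h.comp (f := fun p : (ℝ × ℕ) × (ℕ → ℝ) => ((p.1.1, p.2), p.1.2)) (by fun_prop)

theorem measure_abs_empiricalFreq_sub_ge_le [IsProbabilityMeasure μ] {U : ℕ → Ω → ℝ}
    (hU : ∀ i, Measurable (U i)) (hUiid : iIndepFun U μ)
    (hUdist : ∀ i, μ.map (U i) = volume.restrict (Icc 0 1)) {x : ℝ} (hx : x ∈ Icc (0 : ℝ) 1)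
    {n : ℕ} (hn : 0 < n) {ε : ℝ} (hε : 0 < ε) :
    μ {ω | ε ≤ |empiricalFreq x n (fun i => U i ω) - x|} ≤ ENNReal.ofReal (1 / 4 / n / ε ^ 2) := by
  set B : ℕ → Ω → ℝ := fun i => (U i ⁻¹' Iic x).indicator 1 with hB
  have hA : ∀ i, MeasurableSet (U i ⁻¹' Iic x) := fun i => hU i measurableSet_Iic
  have hP : ∀ i, μ.real (U i ⁻¹' Iic x) = x := fun i =>
    measureReal_preimage_Iic_of_map_eq (hU i) (hUdist i) hx
  have hmean : ∀ i, μ[B i] = x := fun i => by rw [hB, integral_indicator_one (hA i), hP]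
  have hvar : ∀ i, Var[B i; μ] ≤ 1 / 4 := fun i => by
    rw [hB, variance_indicator_one (hA i), hP]
    nlinarith [sq_nonneg (x - 1 / 2)]
  have hind : Pairwise fun i j => B i ⟂ᵢ[μ] B j := fun i j hij => by
    have hφ : Measurable ((Iic x).indicator (1 : ℝ → ℝ)) :=
      measurable_one.indicator measurableSet_Iic
    exact (hUiid.indepFun hij).comp hφ hφ
  have hfreq : ∀ ω, empiricalFreq x n (fun i => U i ω) =
      (n : ℝ)⁻¹ * ∑ i ∈ Finset.range n, B i ω := fun ω => by
    classical
    simp only [empiricalFreq, hB, Set.indicator_apply, mem_preimage, mem_Iic, Pi.one_apply]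
  simpa only [hfreq] using
    measure_abs_average_sub_ge_le (B := B) (fun i => (memLp_const 1).indicator (hA i)) hind hmean
      hvar hn hε

end Uniform

section Independence

variable {Ω α β : Type*} {mΩ : MeasurableSpace Ω} {mα : MeasurableSpace α}
  {mβ : MeasurableSpace β} {μ : Measure Ω} [IsProbabilityMeasure μ]

theorem ProbabilityTheory.IndepFun.measure_mem_le {V : Ω → α} {Y : Ω → β} (hVY : V ⟂ᵢ[μ] Y)
    (hV : AEMeasurable V μ) (hY : AEMeasurable Y μ) {s : Set (α × β)} (hs : MeasurableSet s)
    {c : ENNReal} (hc : ∀ a, μ {ω | (a, Y ω) ∈ s} ≤ c) :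
    μ {ω | (V ω, Y ω) ∈ s} ≤ c := by
  have : IsProbabilityMeasure (μ.map V) := Measure.isProbabilityMeasure_map hV
  calc μ {ω | (V ω, Y ω) ∈ s} = (μ.map V).prod (μ.map Y) s := by
        rw [← (indepFun_iff_map_prod_eq_prod_map_map hV hY).1 hVY,
          Measure.map_apply_of_aemeasurable (hV.prodMk hY) hs]
        rfl
    _ = ∫⁻ a, μ {ω | (a, Y ω) ∈ s} ∂(μ.map V) := by
        rw [Measure.prod_apply hs]
        refine lintegral_congr fun a => ?_
        rw [Measure.map_apply_of_aemeasurable hY (measurable_prodMk_left hs)]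
        rfl
    _ ≤ ∫⁻ _, c ∂(μ.map V) := lintegral_mono hc
    _ = c := by simp

end Independence

section RandomParameter

variable {Ω : Type*} {mΩ : MeasurableSpace Ω} {μ : Measure Ω} [IsProbabilityMeasure μ]

theorem measure_abs_empiricalFreq_sub_ge_le_of_indepFun {X : Ω → ℝ} (hX : Measurable X)
    (hX01 : ∀ ω, X ω ∈ Icc (0 : ℝ) 1) {U : ℕ → Ω → ℝ} (hU : ∀ i, Measurable (U i))
    (hUiid : iIndepFun U μ) (hUdist : ∀ i, μ.map (U i) = volume.restrict (Icc 0 1))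
    {ξ : Ω → ℕ} (hξ : Measurable ξ) (hindep : (fun ω => (X ω, ξ ω)) ⟂ᵢ[μ] fun ω i => U i ω)
    {C : ℕ} (hC : 0 < C) {ε : ℝ} (hε : 0 < ε) :
    μ {ω | C ≤ ξ ω ∧ ε ≤ |empiricalFreq (X ω) (ξ ω) (fun i => U i ω) - X ω|} ≤
      ENNReal.ofReal (1 / 4 / C / ε ^ 2) := by
  -- `x ∈ [0, 1]` is kept in `s` because the slice bound only holds there.
  set s : Set ((ℝ × ℕ) × (ℕ → ℝ)) :=
    {p | p.1.1 ∈ Icc 0 1} ∩ {p | C ≤ p.1.2} ∩ {p | ε ≤ |empiricalFreq p.1.1 p.1.2 p.2 - p.1.1|}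
  have hfreq : Measurable fun p : (ℝ × ℕ) × (ℕ → ℝ) => |empiricalFreq p.1.1 p.1.2 p.2 - p.1.1| :=
    (measurable_empiricalFreq.sub (by fun_prop)).abs
  have hs : MeasurableSet s :=
    ((measurableSet_Icc.preimage (by fun_prop)).inter
      (measurableSet_le measurable_const (by fun_prop))).inter
        (measurableSet_le measurable_const hfreq)
  have hset : {ω | C ≤ ξ ω ∧ ε ≤ |empiricalFreq (X ω) (ξ ω) (fun i => U i ω) - X ω|} =
      {ω | ((X ω, ξ ω), fun i => U i ω) ∈ s} := by
    ext ω; simp [s, (hX01 ω).1, (hX01 ω).2]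
  rw [hset]
  refine hindep.measure_mem_le (by fun_prop) (measurable_pi_lambda _ hU).aemeasurable hs ?_
  rintro ⟨x, n⟩
  by_cases h : x ∈ Icc (0 : ℝ) 1 ∧ C ≤ n
  · calc μ {ω | ((x, n), fun i => U i ω) ∈ s}
        = μ {ω | ε ≤ |empiricalFreq x n (fun i => U i ω) - x|} := by simp [s, h.1.1, h.1.2, h.2]
      _ ≤ ENNReal.ofReal (1 / 4 / n / ε ^ 2) :=
        measure_abs_empiricalFreq_sub_ge_le hU hUiid hUdist h.1 (hC.trans_le h.2) hε
      _ ≤ ENNReal.ofReal (1 / 4 / C / ε ^ 2) := by gcongr; exact_mod_cast h.2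
  · have : {ω | ((x, n), fun i => U i ω) ∈ s} = ∅ :=
      eq_empty_of_forall_notMem fun ω hω => h ⟨hω.1.1, hω.1.2⟩
    simp [this]

theorem tendstoInMeasure_empiricalFreq_sub {ι : Type*} {l : Filter ι} {X : ι → Ω → ℝ}
    (hX : ∀ N, Measurable (X N)) (hX01 : ∀ N ω, X N ω ∈ Icc (0 : ℝ) 1) {U : ℕ → Ω → ℝ}
    (hU : ∀ i, Measurable (U i)) (hUiid : iIndepFun U μ)
    (hUdist : ∀ i, μ.map (U i) = volume.restrict (Icc 0 1)) {ξ : ι → Ω → ℕ}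
    (hξmeas : ∀ N, Measurable (ξ N)) (hξ : ∀ C : ℕ, Tendsto (fun N => μ {ω | ξ N ω < C}) l (𝓝 0))
    (hindep : ∀ N, (fun ω => (X N ω, ξ N ω)) ⟂ᵢ[μ] fun ω i => U i ω) :
    TendstoInMeasure μ (fun N ω => empiricalFreq (X N ω) (ξ N ω) (fun i => U i ω) - X N ω) l 0 := by
  rw [tendstoInMeasure_iff_norm]
  intro ε hε
  simp only [Pi.zero_apply, sub_zero, Real.norm_eq_abs]
  rw [ENNReal.tendsto_nhds_zero]
  intro δ hδ
  have hbound : Tendsto (fun C : ℕ => ENNReal.ofReal (1 / 4 / C / ε ^ 2)) atTop (𝓝 0) := by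
    rw [← ENNReal.ofReal_zero]
    refine ENNReal.tendsto_ofReal ?_
    simpa only [zero_div] using (tendsto_const_div_atTop_nhds_zero_nat (1 / 4)).div_const (ε ^ 2)
  have hδ2 : 0 < δ / 2 := ENNReal.half_pos hδ.ne'
  obtain ⟨C, hCδ, hC⟩ :=
    ((hbound.eventually (ge_mem_nhds hδ2)).and (eventually_gt_atTop 0)).exists
  filter_upwards [(hξ C).eventually (ge_mem_nhds hδ2)] with N hN
  calc μ {ω | ε ≤ |empiricalFreq (X N ω) (ξ N ω) (fun i => U i ω) - X N ω|}
      ≤ μ ({ω | ξ N ω < C} ∪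
          {ω | C ≤ ξ N ω ∧ ε ≤ |empiricalFreq (X N ω) (ξ N ω) (fun i => U i ω) - X N ω|}) :=
        measure_mono fun ω hω => (lt_or_ge (ξ N ω) C).imp id fun h => ⟨h, hω⟩
    _ ≤ δ / 2 + δ / 2 := (measure_union_le _ _).trans <| add_le_add hN <|
        (measure_abs_empiricalFreq_sub_ge_le_of_indepFun (hX N) (hX01 N) hU hUiid hUdist
          (hξmeas N) (hindep N) hC hε).trans hCδ
    _ = δ := ENNReal.add_halves δ

end RandomParameter

section Slutsky

variable {Ω ι : Type*} {mΩ : MeasurableSpace Ω} {μ : Measure Ω} [IsFiniteMeasure μ]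
  {l : Filter ι} {X W : ι → Ω → ℝ} {G : ℝ → ℝ}

theorem Monotone.exists_continuousAt_mem_Ioo (hG : Monotone G) {u v : ℝ} (huv : u < v) :
    ∃ b ∈ Ioo u v, ContinuousAt G b := by
  have hdense : Dense {b | ContinuousAt G b} := by
    simpa only [compl_ofPred, not_not] using hG.countable_not_continuousAt.dense_compl ℝ
  obtain ⟨b, hb, hbuv⟩ := hdense.exists_between huv
  exact ⟨b, hbuv, hb⟩

theorem eventually_measureReal_le_lt
    (hWX : ∀ ε > 0, Tendsto (fun i => μ.real {ω | ε ≤ |W i ω - X i ω|}) l (𝓝 0))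
    (hG : Monotone G) (hW : ∀ b, ContinuousAt G b →
      Tendsto (fun i => μ.real {ω | W i ω ≤ b}) l (𝓝 (G b)))
    {a c : ℝ} (ha : ContinuousAt G a) (hc : G a < c) :
    ∀ᶠ i in l, μ.real {ω | X i ω ≤ a} < c := by
  obtain ⟨v, hav, hv⟩ :=
    exists_Ico_subset_of_mem_nhds (ha.eventually (gt_mem_nhds hc)) (exists_gt a)
  obtain ⟨b, hb, hbG⟩ := hG.exists_continuousAt_mem_Ioo hav
  have hlim := (hW b hbG).add (hWX (b - a) (sub_pos.2 hb.1))
  rw [add_zero] at hlim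
  filter_upwards [hlim.eventually (gt_mem_nhds (hv ⟨hb.1.le, hb.2⟩))] with i hi
  refine lt_of_le_of_lt ((measureReal_mono fun ω hω => ?_).trans (measureReal_union_le _ _)) hi
  rcases le_or_gt (W i ω) b with h | h
  · exact Or.inl h
  · have hXa : X i ω ≤ a := hω
    exact Or.inr (show b - a ≤ |W i ω - X i ω| by linarith [le_abs_self (W i ω - X i ω)])

theorem eventually_lt_measureReal_le
    (hWX : ∀ ε > 0, Tendsto (fun i => μ.real {ω | ε ≤ |W i ω - X i ω|}) l (𝓝 0))
    (hG : Monotone G) (hW : ∀ b, ContinuousAt G b →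
      Tendsto (fun i => μ.real {ω | W i ω ≤ b}) l (𝓝 (G b)))
    {a c : ℝ} (ha : ContinuousAt G a) (hc : c < G a) :
    ∀ᶠ i in l, c < μ.real {ω | X i ω ≤ a} := by
  obtain ⟨u, hua, hu⟩ :=
    exists_Ioc_subset_of_mem_nhds (ha.eventually (lt_mem_nhds hc)) (exists_lt a)
  obtain ⟨b, hb, hbG⟩ := hG.exists_continuousAt_mem_Ioo hua
  have hlim := (hW b hbG).sub (hWX (a - b) (sub_pos.2 hb.2))
  rw [sub_zero] at hlim
  filter_upwards [hlim.eventually (lt_mem_nhds (hu ⟨hb.1, hb.2.le⟩))] with i hi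
  refine hi.trans_le (sub_le_iff_le_add.2 ?_)
  refine (measureReal_mono fun ω hω => ?_).trans (measureReal_union_le _ _)
  rcases le_or_gt (X i ω) a with h | h
  · exact Or.inl h
  · have hWb : W i ω ≤ b := hω
    exact Or.inr (show a - b ≤ |W i ω - X i ω| by linarith [neg_abs_le (W i ω - X i ω)])

theorem tendsto_measureReal_le_of_tendstoInMeasure_sub
    (hWX : TendstoInMeasure μ (fun i => W i - X i) l 0) (hG : Monotone G)
    (hW : ∀ b, ContinuousAt G b → Tendsto (fun i => μ.real {ω | W i ω ≤ b}) l (𝓝 (G b)))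
    {a : ℝ} (ha : ContinuousAt G a) :
    Tendsto (fun i => μ.real {ω | X i ω ≤ a}) l (𝓝 (G a)) := by
  have hWX' : ∀ ε > 0, Tendsto (fun i => μ.real {ω | ε ≤ |W i ω - X i ω|}) l (𝓝 0) := by
    simpa using tendstoInMeasure_iff_measureReal_norm.1 hWX
  exact tendsto_order.2 ⟨fun c hc => eventually_lt_measureReal_le hWX' hG hW ha hc,
    fun c hc => eventually_measureReal_le_lt hWX' hG hW ha hc⟩

end Slutsky

/-- Conditional law of large numbers / de Finetti-type identification: let `X_N` take
values in `[0,1]`, let `(U_i)` be i.i.d. uniform on `[0,1]`, independent of `(X_N, ξ_N)`,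
let `ξ_N → ∞` in probability, and let
`W_N = ξ_N⁻¹ ∑_{i=1}^{ξ_N} 1_{U_i ≤ X_N}` be the empirical frequency. If
`lim_N P(W_N ≤ a)` exists and equals `G a` at all continuity points `a` of a monotone
function `G`, then also `lim_N P(X_N ≤ a) = G a` at all such points, i.e. the empirical
frequencies converge in distribution iff the parameters do, and to the same limit. -/
theorem empirical_frequency_same_limit
    {Ω : Type*} [MeasureSpace Ω] [IsProbabilityMeasure (ℙ : Measure Ω)]
    (X : ℕ → Ω → ℝ) (hXmeas : ∀ N, Measurable (X N))
    (hX01 : ∀ N ω, X N ω ∈ Set.Icc (0 : ℝ) 1)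
    (U : ℕ → Ω → ℝ) (hUmeas : ∀ i, Measurable (U i))
    (hUiid : iIndepFun U ℙ)
    (hUdist : ∀ i, Measure.map (U i) ℙ = volume.restrict (Set.Icc (0 : ℝ) 1))
    (ξ : ℕ → Ω → ℕ) (hξmeas : ∀ N, Measurable (ξ N))
    (hξ : ∀ C : ℕ, Tendsto (fun N => ℙ {ω | ξ N ω < C}) atTop (nhds 0))
    (hindep : ∀ N, IndepFun (fun ω => (X N ω, ξ N ω)) (fun ω (i : ℕ) => U i ω) ℙ)
    (W : ℕ → Ω → ℝ)
    (hW : ∀ N ω, W N ω = (ξ N ω : ℝ)⁻¹ *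
      ∑ i ∈ Finset.range (ξ N ω), (if U i ω ≤ X N ω then (1 : ℝ) else 0))
    (G : ℝ → ℝ) (hGmono : Monotone G)
    (hWlim : ∀ a : ℝ, ContinuousAt G a →
      Tendsto (fun N => (ℙ {ω | W N ω ≤ a}).toReal) atTop (nhds (G a))) :
    ∀ a : ℝ, ContinuousAt G a →
      Tendsto (fun N => (ℙ {ω | X N ω ≤ a}).toReal) atTop (nhds (G a)) := by
  have hWeq : W = fun N ω => empiricalFreq (X N ω) (ξ N ω) (fun i => U i ω) :=
    funext fun N => funext (hW N)
  subst hWeq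
  exact fun a ha => tendsto_measureReal_le_of_tendstoInMeasure_sub
    (tendstoInMeasure_empiricalFreq_sub hXmeas hX01 hUmeas hUiid hUdist hξmeas hξ hindep)
    hGmono hWlim ha
end
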